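/- Let S be a unary semigroup satisfying Σ_ref. Then for every pair of distinct elements a, b ∈ S there exist a unary semigroup T which is either a square band or the adjacency semigroup A(H) of some reflexive graph H, and a surjective unary semigroup homomorphism φ : S → T with φ(a) ≠ φ(b). (Consequently, every unary semigroup satisfying Σ_ref is a subdirect product of adjacency semigroups of reflexive graphs and square bands.) -/

import Mathlib

/-- Multiplication of the adjacency semigroup `A(G)` of a graph `G = ⟨V; r⟩`:
the carrier is `Option (V × V)` with `none` playing the role of the zero element. -/
noncomputable def adjMul {V : Type*} (r : V → V → Prop) :
    Option (V × V) → Option (V × V) → Option (V × V)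
  | some (x, y), some (z, t) =>
      @ite _ (r y z) (Classical.propDecidable _) (some (x, t)) none
  | _, _ => none

/-- Reversion in the adjacency semigroup: `(x,y)' = (y,x)` and `0' = 0`. -/
def adjStar {V : Type*} : Option (V × V) → Option (V × V)
  | some (x, y) => some (y, x)
  | none => none

/-!
Fix `d` and consider the projections `p = p * p = star p` lying `J`-above `d`, two of them being
identified when no element `w ≤_J d` distinguishes them (`w * p = w * q`). These classes are the
vertices of a reflexive graph `H_d` in which `p ∼ q` iff `p * q` still lies above `d`. Sending `x`
to `(x x', x' x)` when `x` lies above `d` and to `0` otherwise is a homomorphism onto `A(H_d)`: the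
identities `Σ_ref` give `(xy)(xy)' ≡ x x'` and `(xy)'(xy) ≡ y' y` modulo the tests, and
`xy` lies above `d` iff `(x' x)(y y')` does. When every element lies above `d` the zero is never
hit and the map lands in the square band on the vertices.

To separate `a ≠ b`, take `d` to be one of them that does not lie below the other; if `a` and `b`
are `J`-equivalent take `d = a`. In the latter case equal images force `a a' = b b'` and
`a' a = b' b`, and in a semigroup satisfying `Σ_ref` an element is determined by these two
projections.
-/

universe u

/-- `x ≤_J y`, as membership in `S y S`; once `y y' y = y` this is the ideal `S¹ y S¹`. -/
def JLe {S : Type*} [Semigroup S] (x y : S) : Prop := ∃ u v : S, x = u * y * v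

namespace JLe

variable {S : Type*} [Semigroup S] {x y z : S}

theorem trans (hxy : JLe x y) (hyz : JLe y z) : JLe x z := by
  obtain ⟨u, v, rfl⟩ := hxy
  obtain ⟨u', v', rfl⟩ := hyz
  exact ⟨u * u', v' * v, by simp only [mul_assoc]⟩

theorem of_mul_left (h : JLe x (y * z)) : JLe x y := by
  obtain ⟨u, v, rfl⟩ := h
  exact ⟨u, z * v, by simp only [mul_assoc]⟩

theorem of_mul_right (h : JLe x (y * z)) : JLe x z := by
  obtain ⟨u, v, rfl⟩ := h
  exact ⟨u * y, v, by simp only [mul_assoc]⟩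

end JLe

class SigmaRef (S : Type*) [Semigroup S] [Star S] : Prop where
  star_star_eq : ∀ x : S, star (star x) = x
  mul_star_mul_eq : ∀ x y z : S, x * star (y * z) = star (y * star (x * star z))
  star_mul_mul_eq : ∀ x y z : S, star (x * y) * z = star (star (star x * z) * y)
  mul_star_mul_self : ∀ x : S, x * star x * x = x
  star_mul_star_self : ∀ x : S, star (x * star x) = x * star x
  sandwich_insert : ∀ x y z : S, x * y * x * z * x = x * z * x * y * x * z * x
  sandwich_drop : ∀ x y z : S, x * z * x * y * x * z * x = x * z * x * y * x

namespace SigmaRef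

variable {S : Type*} [Semigroup S] [Star S] [SigmaRef S]

theorem star_mul_self_mul_star (x : S) : star x * x * star x = star x := by
  simpa only [star_star_eq] using mul_star_mul_self (star x)

theorem star_star_mul_self (x : S) : star (star x * x) = star x * x := by
  simpa only [star_star_eq] using star_mul_star_self (star x)

theorem isStarProjection_mul_star (x : S) : IsStarProjection (x * star x) where
  isIdempotentElem := by
    rw [IsIdempotentElem, ← mul_assoc, mul_star_mul_self]
  isSelfAdjoint := star_mul_star_self x

theorem isStarProjection_star_mul (x : S) : IsStarProjection (star x * x) where
  isIdempotentElem := by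
    rw [IsIdempotentElem, ← mul_assoc, star_mul_self_mul_star]
  isSelfAdjoint := star_star_mul_self x

theorem proj_mul_star_mul_proj {q : S} (hq : IsStarProjection q) (b : S) :
    q * star (b * q) = star (b * q) := by
  rw [mul_star_mul_eq, hq.isSelfAdjoint.star_eq, hq.isIdempotentElem.eq, hq.isSelfAdjoint.star_eq]

theorem star_proj_mul_mul_proj {q : S} (hq : IsStarProjection q) (b : S) :
    star (q * b) * q = star (q * b) := by
  rw [star_mul_mul_eq, hq.isSelfAdjoint.star_eq, hq.isIdempotentElem.eq, hq.isSelfAdjoint.star_eq]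

theorem star_mul_mul_mul_star (x y : S) : star (x * y) * (x * star x) = star (x * y) := by
  rw [star_mul_mul_eq, ← mul_assoc, star_mul_self_mul_star, star_star_eq]

theorem star_mul_mul_star_mul (x y : S) : star y * (y * star (x * y)) = star (x * y) := by
  rw [mul_star_mul_eq y, star_mul_star_self, mul_star_mul_eq, star_mul_star_self, ← mul_assoc,
    star_mul_self_mul_star, star_star_eq]

theorem sandwich_comm (x y z : S) : x * y * x * z * x = x * z * x * y * x :=
  (sandwich_insert x y z).trans (sandwich_drop x y z)

theorem mul_mul_mul_star_mul (x y m : S) :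
    x * y * m * (x * y * star (x * y)) = x * y * m * (x * star x) :=
  calc x * y * m * (x * y * star (x * y))
      = x * y * m * (x * y * (star (x * y) * (x * star x))) := by rw [star_mul_mul_mul_star]
    _ = x * (y * m) * x * (y * star (x * y)) * x * star x := by simp only [mul_assoc]
    _ = x * (y * star (x * y)) * x * (y * m) * x * star x := by rw [sandwich_comm]
    _ = x * y * star (x * y) * (x * y) * m * (x * star x) := by simp only [mul_assoc]
    _ = x * y * m * (x * star x) := by rw [mul_star_mul_self]

theorem mul_mul_star_mul_mul (x y m : S) :
    x * y * m * (star (x * y) * (x * y)) = x * y * m * (star y * y) :=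
  calc x * y * m * (star (x * y) * (x * y))
      = x * y * star (x * y) * (x * y) * m * (star y * (y * star (x * y)) * (x * y)) := by
        rw [mul_star_mul_self, star_mul_mul_star_mul]
    _ = x * (y * (star (x * y) * x) * y * (m * star y) * y * (star (x * y) * x) * y) := by
        simp only [mul_assoc]
    _ = x * (y * (star (x * y) * x) * y * (m * star y) * y) := by rw [sandwich_drop]
    _ = x * y * star (x * y) * (x * y) * m * (star y * y) := by simp only [mul_assoc]
    _ = x * y * m * (star y * y) := by rw [mul_star_mul_self]

theorem projections_eq_of_mul_right {e f : S} (he : IsStarProjection e) (hf : IsSelfAdjoint f)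
    (hef : e * f = f) (hfe : f * e = e) : e = f := by
  have h := star_proj_mul_mul_proj he f
  rwa [hef, hf.star_eq, hfe] at h

theorem projections_eq_of_mul_left {g h : S} (hh : IsStarProjection h) (hg : IsSelfAdjoint g)
    (hgh : g * h = g) (hhg : h * g = h) : g = h := by
  have k := proj_mul_star_mul_proj hh g
  rwa [hgh, hg.star_eq, hhg, eq_comm] at k

theorem eq_of_mul_star_eq_of_star_mul_eq {a b : S} (hr : a * star a = b * star b)
    (hl : star a * a = star b * b) : a = b := by
  obtain ⟨g, hg⟩ : ∃ g, g = star a * a := ⟨_, rfl⟩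
  obtain ⟨u, hu⟩ : ∃ u, u = star a * b := ⟨_, rfl⟩
  have hgg : g * g = g := hg ▸ (isStarProjection_star_mul a).isIdempotentElem
  have hgu : g * u = u := by rw [hg, hu, ← mul_assoc, star_mul_self_mul_star]
  have hug : u * g = u := by rw [hg, hl, hu, mul_assoc, ← mul_assoc b, mul_star_mul_self]
  -- `u = g * u * g` with `g` idempotent, so the sandwich identity makes `u` idempotent
  have huu : u * u = u :=
    calc u * u = g * u * g * g * g * u * g := by rw [hgu, hug, hug, hug, mul_assoc, hug]
      _ = g * g * g * u * g := (sandwich_insert g g u).symm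
      _ = u := by rw [hgg, hgg, hgu, hug]
  have hub : u * (star b * a) = g := by
    rw [hu, hg, mul_assoc, ← mul_assoc b, ← hr, mul_star_mul_self]
  have hug' : u = g :=
    calc u = u * g := hug.symm
      _ = u * u * (star b * a) := by rw [mul_assoc, hub]
      _ = g := by rw [huu, hub]
  calc a = a * g := by rw [hg, ← mul_assoc, mul_star_mul_self]
    _ = b := by rw [← hug', hu, ← mul_assoc, hr, mul_star_mul_self]

end SigmaRef

namespace JLe

variable {S : Type*} [Semigroup S] [Star S] [SigmaRef S] {d x y : S}

open SigmaRef

theorem refl (x : S) : JLe x x :=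
  ⟨x * star x, star x * x, by rw [mul_star_mul_self, ← mul_assoc, mul_star_mul_self]⟩

theorem star_self (x : S) : JLe (star x) x :=
  ⟨star x, star x, (star_mul_self_mul_star x).symm⟩

theorem mul_right_self (x y : S) : JLe (x * y) x :=
  ⟨x * star x, y, by rw [mul_star_mul_self]⟩

theorem star_right (h : JLe d x) : JLe d (star x) :=
  h.trans ⟨x, x, (mul_star_mul_self x).symm⟩

theorem mul_star (h : JLe d x) : JLe d (x * star x) :=
  h.trans ⟨x * star x, x, by rw [(isStarProjection_mul_star x).isIdempotentElem.eq,
    mul_star_mul_self]⟩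

theorem star_mul (h : JLe d x) : JLe d (star x * x) :=
  h.trans ⟨x, star x * x, by rw [mul_assoc, (isStarProjection_star_mul x).isIdempotentElem.eq,
    ← mul_assoc, mul_star_mul_self]⟩

theorem star_mul_mul_mul_star_iff : JLe d (star x * x * (y * star y)) ↔ JLe d (x * y) :=
  ⟨fun h => h.trans ⟨star x, star y, by simp only [mul_assoc]⟩,
    fun h => h.trans ⟨x, y, by
      conv_lhs => rw [← mul_star_mul_self x, ← mul_star_mul_self y]
      simp only [mul_assoc]⟩⟩

theorem exists_mul_mul {p q : S} (hp : JLe d p) (hq : JLe d q) : ∃ m, JLe d (p * m * q) := by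
  obtain ⟨u₁, v₁, hd₁⟩ := hp
  obtain ⟨u₂, v₂, hd₂⟩ := hq
  refine ⟨v₁ * star d * u₂, u₁, v₂, ?_⟩
  calc d = u₁ * p * v₁ * star d * (u₂ * q * v₂) := by rw [← hd₁, ← hd₂, mul_star_mul_self]
    _ = u₁ * (p * (v₁ * star d * u₂) * q) * v₂ := by simp only [mul_assoc]

theorem mul_mul_mul_star {w : S} (h : JLe w (x * y)) :
    w * (x * y * star (x * y)) = w * (x * star x) := by
  obtain ⟨s, t, rfl⟩ := h
  simpa only [mul_assoc] using congrArg (s * ·) (mul_mul_mul_star_mul x y t)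

theorem mul_star_mul_mul {w : S} (h : JLe w (x * y)) :
    w * (star (x * y) * (x * y)) = w * (star y * y) := by
  obtain ⟨s, t, rfl⟩ := h
  simpa only [mul_assoc] using congrArg (s * ·) (mul_mul_star_mul_mul x y t)

end JLe

open Classical in
theorem adjMul_some_some {V : Type*} (r : V → V → Prop) (p q : V × V) :
    adjMul r (some p) (some q) = if r p.2 q.1 then some (p.1, q.2) else none :=
  rfl

theorem adjMul_none_left {V : Type*} (r : V → V → Prop) (z : Option (V × V)) :
    adjMul r none z = none := by
  cases z <;> rfl

theorem adjMul_none_right {V : Type*} (r : V → V → Prop) (z : Option (V × V)) :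
    adjMul r z none = none := by
  rcases z with _ | ⟨_, _⟩ <;> rfl

namespace SigmaRef

variable {S : Type*} [Semigroup S] [Star S] [SigmaRef S]

theorem eq_of_forall_jle_mul_eq {a b : S} (hba : JLe b a)
    (hr : ∀ w, JLe w a → w * (a * star a) = w * (b * star b))
    (hl : ∀ w, JLe w a → w * (star a * a) = w * (star b * b)) : a = b := by
  have hba' : b * star b * a = a := by
    have h := proj_mul_star_mul_proj (isStarProjection_mul_star b) (star a)
    rwa [← hr _ (JLe.star_self a), ← mul_assoc, star_mul_self_mul_star, star_star_eq] at h
  have hab' : a * star a * b = b := by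
    have h := proj_mul_star_mul_proj (isStarProjection_mul_star a) (star b)
    rwa [hr _ ((JLe.star_self b).trans hba), ← mul_assoc, star_mul_self_mul_star,
      star_star_eq] at h
  have ha : a * (star b * b) = a := by rw [← hl a (JLe.refl a), ← mul_assoc, mul_star_mul_self]
  have hb : b * (star a * a) = b := by rw [hl b hba, ← mul_assoc, mul_star_mul_self]
  refine eq_of_mul_star_eq_of_star_mul_eq ?_ ?_
  · exact projections_eq_of_mul_right (isStarProjection_mul_star a)
      (isStarProjection_mul_star b).isSelfAdjoint (by rw [← mul_assoc, hab'])
      (by rw [← mul_assoc, hba'])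
  · exact projections_eq_of_mul_left (isStarProjection_star_mul b)
      (isStarProjection_star_mul a).isSelfAdjoint (by rw [mul_assoc, ha]) (by rw [mul_assoc, hb])

theorem jle_mul_of_forall_jle_mul_eq {d p q p' q' : S} (hp : IsIdempotentElem p)
    (hq : IsIdempotentElem q) (hpp' : ∀ w, JLe w d → w * p = w * p')
    (hqq' : ∀ w, JLe w d → w * q = w * q') (h : JLe d (p * q)) : JLe d (p' * q') := by
  obtain ⟨u, v, hd⟩ := h
  -- `w = d d' u p` lies below `d`, absorbs `p` and satisfies `w q v = d`
  obtain ⟨w, hw⟩ : ∃ w, w = d * (star d * u * p) := ⟨_, rfl⟩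
  have hwd : JLe w d := hw ▸ JLe.mul_right_self d _
  have hwp : w * p = w := by simp only [hw, mul_assoc, hp.eq]
  have hwq : w * q * q = w * q := by rw [mul_assoc, hq.eq]
  refine ⟨w, q * v, ?_⟩
  calc d = d * star d * (u * (p * q) * v) := by rw [← hd, mul_star_mul_self]
    _ = w * q * v := by rw [hw]; simp only [mul_assoc]
    _ = w * q * q * v := by rw [hwq]
    _ = w * q' * (q * v) := by rw [← hqq' w hwd, mul_assoc (w * q)]
    _ = w * p' * q' * (q * v) := by rw [← hpp' w hwd, hwp]
    _ = w * (p' * q') * (q * v) := by rw [mul_assoc w]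

@[ext]
structure ProjAbove (d : S) where
  val : S
  isStarProjection : IsStarProjection val
  jle : JLe d val

instance ProjAbove.setoid (d : S) : Setoid (ProjAbove d) where
  r p q := ∀ w, JLe w d → w * p.val = w * q.val
  iseqv := ⟨fun _ _ _ => rfl, fun h w hw => (h w hw).symm,
    fun h₁ h₂ w hw => (h₁ w hw).trans (h₂ w hw)⟩

def Vert (d : S) : Type _ := Quotient (ProjAbove.setoid d)

def vertPair (d x : S) (hx : JLe d x) : Vert d × Vert d :=
  (⟦⟨x * star x, isStarProjection_mul_star x, hx.mul_star⟩⟧,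
    ⟦⟨star x * x, isStarProjection_star_mul x, hx.star_mul⟩⟧)

def edge (d : S) : Vert d → Vert d → Prop :=
  Quotient.lift₂ (fun p q => JLe d (p.val * q.val)) fun p q p' q' hp hq =>
    propext ⟨jle_mul_of_forall_jle_mul_eq p.isStarProjection.isIdempotentElem
        q.isStarProjection.isIdempotentElem hp hq,
      jle_mul_of_forall_jle_mul_eq p'.isStarProjection.isIdempotentElem
        q'.isStarProjection.isIdempotentElem (fun w hw => (hp w hw).symm)
        (fun w hw => (hq w hw).symm)⟩

open Classical in
noncomputable def adjHom (d x : S) : Option (Vert d × Vert d) :=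
  if hx : JLe d x then some (vertPair d x hx) else none

section Graph

variable (d : S)

theorem vertPair_mul {x y : S} (hxy : JLe d (x * y)) :
    vertPair d (x * y) hxy =
      ((vertPair d x hxy.of_mul_left).1, (vertPair d y hxy.of_mul_right).2) :=
  Prod.ext (Quotient.sound fun _ hw => (hw.trans hxy).mul_mul_mul_star)
    (Quotient.sound fun _ hw => (hw.trans hxy).mul_star_mul_mul)

theorem vertPair_star {x : S} (hx : JLe d x) :
    vertPair d (star x) hx.star_right = ((vertPair d x hx).2, (vertPair d x hx).1) := by
  have h₁ : star x * star (star x) = star x * x := by rw [star_star_eq]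
  have h₂ : star (star x) * star x = x * star x := by rw [star_star_eq]
  exact Prod.ext (congrArg (Quotient.mk _) (ProjAbove.ext h₁))
    (congrArg (Quotient.mk _) (ProjAbove.ext h₂))

theorem exists_vertPair_eq (v : Vert d × Vert d) : ∃ x, ∃ hx : JLe d x, vertPair d x hx = v := by
  obtain ⟨v₁, v₂⟩ := v
  induction v₁ using Quotient.ind with | _ p => ?_
  induction v₂ using Quotient.ind with | _ q => ?_
  obtain ⟨m, hm⟩ := p.jle.exists_mul_mul q.jle
  refine ⟨p.val * m * q.val, hm,
    Prod.ext (Quotient.sound fun w hw => ?_) (Quotient.sound fun w hw => ?_)⟩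
  · change w * (p.val * m * q.val * star (p.val * m * q.val)) = w * p.val
    rw [mul_assoc p.val] at hm ⊢
    rw [(hw.trans hm).mul_mul_mul_star, p.isStarProjection.isSelfAdjoint.star_eq,
      p.isStarProjection.isIdempotentElem.eq]
  · change w * (star (p.val * m * q.val) * (p.val * m * q.val)) = w * q.val
    rw [(hw.trans hm).mul_star_mul_mul, q.isStarProjection.isSelfAdjoint.star_eq,
      q.isStarProjection.isIdempotentElem.eq]

theorem eq_of_vertPair_eq {a b : S} (hba : JLe b a) (hab : JLe a b)
    (h : vertPair a a (JLe.refl a) = vertPair a b hab) : a = b :=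
  eq_of_forall_jle_mul_eq hba (Quotient.exact (congrArg Prod.fst h))
    (Quotient.exact (congrArg Prod.snd h))

theorem edge_refl (v : Vert d) : edge d v v := by
  induction v using Quotient.ind with | _ p => ?_
  change JLe d (p.val * p.val)
  rw [p.isStarProjection.isIdempotentElem.eq]
  exact p.jle

theorem edge_vertPair_iff {x y : S} (hx : JLe d x) (hy : JLe d y) :
    edge d (vertPair d x hx).2 (vertPair d y hy).1 ↔ JLe d (x * y) :=
  JLe.star_mul_mul_mul_star_iff

theorem adjHom_of_jle {x : S} (hx : JLe d x) : adjHom d x = some (vertPair d x hx) :=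
  dif_pos hx

theorem adjHom_of_not_jle {x : S} (hx : ¬JLe d x) : adjHom d x = none :=
  dif_neg hx

theorem adjHom_mul (x y : S) : adjHom d (x * y) = adjMul (edge d) (adjHom d x) (adjHom d y) := by
  by_cases hx : JLe d x
  swap
  · rw [adjHom_of_not_jle d hx, adjHom_of_not_jle d (mt JLe.of_mul_left hx), adjMul_none_left]
  by_cases hy : JLe d y
  swap
  · rw [adjHom_of_not_jle d hy, adjHom_of_not_jle d (mt JLe.of_mul_right hy), adjMul_none_right]
  rw [adjHom_of_jle d hx, adjHom_of_jle d hy, adjMul_some_some]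
  by_cases hxy : JLe d (x * y)
  · rw [if_pos ((edge_vertPair_iff d hx hy).mpr hxy), adjHom_of_jle d hxy, vertPair_mul d hxy]
  · rw [if_neg (mt (edge_vertPair_iff d hx hy).mp hxy), adjHom_of_not_jle d hxy]

theorem adjHom_star (x : S) : adjHom d (star x) = adjStar (adjHom d x) := by
  by_cases hx : JLe d x
  · rw [adjHom_of_jle d hx.star_right, adjHom_of_jle d hx, vertPair_star d hx]
    rfl
  · have hsx : ¬JLe d (star x) := fun h => hx (star_star_eq x ▸ h.star_right)
    rw [adjHom_of_not_jle d hsx, adjHom_of_not_jle d hx]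
    rfl

theorem adjHom_surjective (hd : ∃ s, ¬JLe d s) : Function.Surjective (adjHom d) := by
  rintro (_ | v)
  · obtain ⟨s, hs⟩ := hd
    exact ⟨s, adjHom_of_not_jle d hs⟩
  · obtain ⟨x, hx, rfl⟩ := exists_vertPair_eq d v
    exact ⟨x, adjHom_of_jle d hx⟩

end Graph

theorem exists_adjHom_ne {a b : S} (hab : a ≠ b) (h : ¬(JLe a b ∧ JLe b a ∧ ∀ s, JLe a s)) :
    ∃ d : S, (∃ s, ¬JLe d s) ∧ adjHom d a ≠ adjHom d b := by
  by_cases hab' : JLe a b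
  swap
  · refine ⟨a, ⟨b, hab'⟩, ?_⟩
    rw [adjHom_of_jle a (JLe.refl a), adjHom_of_not_jle a hab']
    exact Option.some_ne_none _
  by_cases hba : JLe b a
  swap
  · refine ⟨b, ⟨a, hba⟩, ?_⟩
    rw [adjHom_of_not_jle b hba, adjHom_of_jle b (JLe.refl b)]
    exact (Option.some_ne_none _).symm
  refine ⟨a, not_forall.mp fun hmin => h ⟨hab', hba, hmin⟩, ?_⟩
  rw [adjHom_of_jle a (JLe.refl a), adjHom_of_jle a hab', ne_eq, Option.some_inj]
  exact fun h => hab (eq_of_vertPair_eq hba hab' h)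

end SigmaRef

theorem Sigma_ref_subdirect_general {S : Type u} [Semigroup S] [Star S]
    (h1 : ∀ x : S, star (star x) = x)
    (h2 : ∀ x y z : S, x * star (y * z) = star (y * star (x * star z)))
    (h3 : ∀ x y z : S, star (x * y) * z = star (star (star x * z) * y))
    (h4 : ∀ x : S, x * star x * x = x)
    (h5 : ∀ x : S, star (x * star x) = x * star x)
    (h7 : ∀ x y z : S, x * y * x * z * x = x * z * x * y * x * z * x)
    (h8 : ∀ x y z : S, x * z * x * y * x * z * x = x * z * x * y * x) :
    ∀ a b : S, a ≠ b →
      (∃ (V : Type u), Nonempty V ∧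
          ∃ φ : S → V × V, Function.Surjective φ ∧
            (∀ x y : S, φ (x * y) = ((φ x).1, (φ y).2)) ∧
            (∀ x : S, φ (star x) = ((φ x).2, (φ x).1)) ∧
            φ a ≠ φ b) ∨
      (∃ (V : Type u) (rel : V → V → Prop), (∀ v : V, rel v v) ∧
          ∃ φ : S → Option (V × V), Function.Surjective φ ∧
            (∀ x y : S, φ (x * y) = adjMul rel (φ x) (φ y)) ∧
            (∀ x : S, φ (star x) = adjStar (φ x)) ∧
            φ a ≠ φ b) := by
  have : SigmaRef S := ⟨h1, h2, h3, h4, h5, h7, h8⟩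
  intro a b hab
  by_cases hsq : JLe a b ∧ JLe b a ∧ ∀ s, JLe a s
  · obtain ⟨hab', hba, hmin⟩ := hsq
    refine Or.inl ⟨SigmaRef.Vert a, ⟨(SigmaRef.vertPair a a (hmin a)).1⟩,
      fun x => SigmaRef.vertPair a x (hmin x), fun v => ?_,
      fun x y => SigmaRef.vertPair_mul a (hmin (x * y)),
      fun x => SigmaRef.vertPair_star a (hmin x),
      fun h => hab (SigmaRef.eq_of_vertPair_eq hba hab' h)⟩
    obtain ⟨x, _, hx⟩ := SigmaRef.exists_vertPair_eq a v
    exact ⟨x, hx⟩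
  · obtain ⟨d, hd, hne⟩ := SigmaRef.exists_adjHom_ne hab hsq
    exact Or.inr ⟨SigmaRef.Vert d, SigmaRef.edge d, SigmaRef.edge_refl d, SigmaRef.adjHom d,
      SigmaRef.adjHom_surjective d hd, SigmaRef.adjHom_mul d, SigmaRef.adjHom_star d, hne⟩

/-- Lemma: every unary semigroup satisfying `Σ_ref` is a subdirect product of
adjacency semigroups of reflexive graphs and square bands: any two distinct
elements are separated by a surjective unary semigroup homomorphism onto a
square band or onto the adjacency semigroup of some reflexive graph. -/
theorem Sigma_ref_subdirect {S : Type u} [Semigroup S] [Star S]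
    (h1 : ∀ x : S, star (star x) = x)
    (h2 : ∀ x y z : S, x * star (y * z) = star (y * star (x * star z)))
    (h3 : ∀ x y z : S, star (x * y) * z = star (star (star x * z) * y))
    (h4 : ∀ x : S, x * star x * x = x)
    (h5 : ∀ x : S, star (x * star x) = x * star x)
    (h6 : ∀ x : S, x * x * x = x * x)
    (h7 : ∀ x y z : S, x * y * x * z * x = x * z * x * y * x * z * x)
    (h8 : ∀ x y z : S, x * z * x * y * x * z * x = x * z * x * y * x)
    (h9 : ∀ x y z : S, star x * y * x * z * x = star (x * z * x) * y * x * z * x)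
    (h10 : ∀ x y z : S, x * y * x * z * star x = x * y * x * z * star (x * y * x)) :
    ∀ a b : S, a ≠ b →
      (∃ (V : Type u), Nonempty V ∧
          ∃ φ : S → V × V, Function.Surjective φ ∧
            (∀ x y : S, φ (x * y) = ((φ x).1, (φ y).2)) ∧
            (∀ x : S, φ (star x) = ((φ x).2, (φ x).1)) ∧
            φ a ≠ φ b) ∨
      (∃ (V : Type u) (rel : V → V → Prop), (∀ v : V, rel v v) ∧
          ∃ φ : S → Option (V × V), Function.Surjective φ ∧
            (∀ x y : S, φ (x * y) = adjMul rel (φ x) (φ y)) ∧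
            (∀ x : S, φ (star x) = adjStar (φ x)) ∧
            φ a ≠ φ b) :=
  Sigma_ref_subdirect_general h1 h2 h3 h4 h5 h7 h8
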